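/- arXiv:1612.05295 — 2 statements merged into one kernel-verified Lean document; each statement's English description precedes it below -/
import Mathlib

section
/- For every n ≥ 1, M(n) equals the number of subsets of {1,...,n} whose elements sum to ⌊n(n+1)/4⌋; that is, the maximum over K of the number of subsets of {1,...,n} with sum K is attained at K = ⌊n(n+1)/4⌋. -/
/-!
Proctor's `sl₂` argument. Let `X` act on functions of subsets of `{1,…,n}` by undoing one move
of an element from `a` to `a + 1` (where `a = 0` means inserting `1`), so that `X` maps functions
supported on sum `k` to functions supported on sum `k + 1`, and let `Y` be the reverse moves,
weighted by `coeff n a`. For a suitable product weight on subsets, `Y` is the adjoint of `X`, and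
`YX - XY` acts on subsets of sum `k` as multiplication by `n(n+1) - 4k`. Hence for `f ≠ 0`
supported on sum `k` with `4k < n(n+1)`,
`‖Xf‖² = ‖Yf‖² + (n(n+1) - 4k)‖f‖² > 0`, so `X` is injective there and the number of subsets
with sum `k` is nondecreasing up to `⌊n(n+1)/4⌋`. Complementation in `{1,…,n}` makes these
numbers symmetric about `n(n+1)/4`, so the middle one is the largest.
-/

/-- The number of subsets of `{1,…,n}` whose elements sum to `i`. -/
def levelCard (n i : ℕ) : ℕ :=
  (((Finset.Icc 1 n).powerset).filter (fun s => s.sum id = i)).card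

/-- `M n`: the maximum over `K ∈ ℕ` of the number of subsets of `{1,…,n}`
whose elements sum to `K`. -/
noncomputable def M (n : ℕ) : ℕ := ⨆ K : ℕ, levelCard n K

open Finset

namespace SubsetSum

lemma sum_mul_sum_sub_sum_mul_sum {ι R : Type*} [Ring R] (s : Finset ι) (x y : ι → R)
    (h : ∀ i ∈ s, ∀ j ∈ s, i ≠ j → Commute (x i) (y j)) :
    (∑ i ∈ s, x i) * (∑ j ∈ s, y j) - (∑ j ∈ s, y j) * (∑ i ∈ s, x i)
      = ∑ i ∈ s, (x i * y i - y i * x i) := by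
  rw [sum_mul_sum, sum_mul_sum, sum_comm (s := s) (t := s) (f := fun j i => y j * x i),
    ← sum_sub_distrib]
  refine sum_congr rfl fun i hi => ?_
  rw [← sum_sub_distrib, sum_eq_single_of_mem i hi]
  exact fun j hj hji => sub_eq_zero.2 (h i hi j hj hji.symm).eq

section Pullback

variable {α : Type*}

def pullback (p : α → Prop) [DecidablePred p] (φ : α → α) : Module.End ℚ (α → ℚ) where
  toFun f x := if p x then f (φ x) else 0
  map_add' f g := by ext x; split_ifs <;> simp [*]
  map_smul' r f := by ext x; split_ifs <;> simp [*]

@[simp] lemma pullback_apply (p : α → Prop) [DecidablePred p] (φ : α → α) (f : α → ℚ) (x : α) :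
    pullback p φ f x = if p x then f (φ x) else 0 := rfl

lemma commute_pullback {p q : α → Prop} [DecidablePred p] [DecidablePred q] {φ ψ : α → α}
    (hpq : ∀ x, p x ∧ q (φ x) ↔ q x ∧ p (ψ x)) (hφψ : ∀ x, p x ∧ q (φ x) → ψ (φ x) = φ (ψ x)) :
    Commute (pullback p φ) (pullback q ψ) := by
  ext f x
  simp only [Module.End.mul_apply, pullback_apply]
  by_cases h : p x ∧ q (φ x)
  · rw [if_pos h.1, if_pos h.2, if_pos ((hpq x).1 h).1, if_pos ((hpq x).1 h).2, hφψ x h]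
  · have h' := mt (hpq x).2 h
    split_ifs <;> tauto

lemma sum_mul_pullback {s : Finset α} {w : α → ℚ} {c : ℚ}
    {p q : α → Prop} [DecidablePred p] [DecidablePred q] {φ ψ : α → α}
    (hφ : ∀ x ∈ s, p x → φ x ∈ s ∧ q (φ x) ∧ ψ (φ x) = x)
    (hψ : ∀ y ∈ s, q y → ψ y ∈ s ∧ p (ψ y) ∧ φ (ψ y) = y)
    (hw : ∀ x ∈ s, p x → w x = c * w (φ x)) (f g : α → ℚ) :
    ∑ x ∈ s, w x * (pullback p φ f x * g x) = ∑ y ∈ s, w y * (f y * (c • pullback q ψ g) y) := by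
  simp only [pullback_apply, Pi.smul_apply, smul_eq_mul, ite_mul, mul_ite, zero_mul, mul_zero]
  rw [← sum_filter, ← sum_filter]
  refine sum_nbij' φ ψ ?_ ?_ ?_ ?_ ?_
  · intro x hx
    obtain ⟨hxs, hpx⟩ := mem_filter.1 hx
    exact mem_filter.2 ⟨(hφ x hxs hpx).1, (hφ x hxs hpx).2.1⟩
  · intro y hy
    obtain ⟨hys, hqy⟩ := mem_filter.1 hy
    exact mem_filter.2 ⟨(hψ y hys hqy).1, (hψ y hys hqy).2.1⟩
  · intro x hx
    exact (hφ x (mem_filter.1 hx).1 (mem_filter.1 hx).2).2.2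
  · intro y hy
    exact (hψ y (mem_filter.1 hy).1 (mem_filter.1 hy).2).2.2
  · intro x hx
    obtain ⟨hxs, hpx⟩ := mem_filter.1 hx
    rw [hw x hxs hpx, (hφ x hxs hpx).2.2]
    ring

end Pullback

-- `raiseAt a f U` is `f` at the set from which `U` arises by moving an element from `a` to
-- `a + 1` (for `a = 0`: by inserting `1`), and `0` if there is no such set.
def raiseAt (a : ℕ) : Module.End ℚ (Finset ℕ → ℚ) :=
  if a = 0 then pullback (1 ∈ ·) (·.erase 1)
  else pullback (fun U => a + 1 ∈ U ∧ a ∉ U) (fun U => insert a (U.erase (a + 1)))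

def lowerAt (a : ℕ) : Module.End ℚ (Finset ℕ → ℚ) :=
  if a = 0 then pullback (1 ∉ ·) (insert 1)
  else pullback (fun S => a ∈ S ∧ a + 1 ∉ S) (fun S => insert (a + 1) (S.erase a))

lemma commute_lowerAt_raiseAt {a b : ℕ} (hab : b ≠ a) : Commute (lowerAt b) (raiseAt a) := by
  unfold lowerAt raiseAt
  split_ifs
  all_goals first
    | omega
    | refine commute_pullback (fun S => ?_) (fun S _ => ?_)
      · simp only [mem_insert, mem_erase]; grind
      · ext x; simp only [mem_insert, mem_erase]; grind

-- The number of `a`-moves out of `S` minus the number of `a`-moves into `S`.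
def moveBalance (a : ℕ) (S : Finset ℕ) : ℚ :=
  if a = 0 then (if 1 ∈ S then -1 else 1)
  else (if a ∈ S then 1 else 0) - (if a + 1 ∈ S then 1 else 0)

lemma lowerAt_mul_raiseAt_sub_apply (a : ℕ) (f : Finset ℕ → ℚ) (S : Finset ℕ) :
    (lowerAt a * raiseAt a - raiseAt a * lowerAt a) f S = moveBalance a S * f S := by
  unfold lowerAt raiseAt moveBalance
  by_cases ha : a = 0
  · by_cases h : 1 ∈ S <;> simp [ha, h]
  · by_cases h : a ∈ S <;> by_cases h' : a + 1 ∈ S <;> simp [ha, h, h']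

def coeff (n a : ℕ) : ℚ := if a = 0 then n * (n + 1) else 2 * (n * (n + 1) - a * (a + 1))

lemma coeff_pos {n a : ℕ} (ha : a < n) : 0 < coeff n a := by
  have : (a : ℚ) + 1 ≤ n := by exact_mod_cast ha
  unfold coeff
  split_ifs <;> nlinarith

lemma sum_coeff_mul_moveBalance {n : ℕ} {S : Finset ℕ} (hS : S ⊆ Icc 1 n) :
    ∑ a ∈ range n, coeff n a * moveBalance a S = n * (n + 1) - 4 * ∑ j ∈ S, (j : ℚ) := by
  set e : ℕ → ℚ := fun j => if j ∈ S then 1 else 0 with he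
  set d : ℕ → ℚ := fun a => 2 * (n * (n + 1) - a * (a + 1)) with hd
  have e_zero : e 0 = 0 := if_neg fun h => by simpa using hS h
  have shift : ∀ g : ℕ → ℚ,
      ∑ a ∈ range (n + 1), g a * e a = ∑ a ∈ range n, g (a + 1) * e (a + 1) := by
    intro g
    simp [sum_range_succ', e_zero]
  have term : ∀ a, coeff n a * moveBalance a S
      = (if a = 0 then (n * (n + 1) : ℚ) else 0) + d a * (e a - e (a + 1)) := by
    intro a
    rcases eq_or_ne a 0 with rfl | ha
    · rw [e_zero]
      simp only [coeff, moveBalance, hd, he, zero_add]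
      split_ifs <;> push_cast <;> ring
    · simp only [coeff, moveBalance, if_neg ha, hd, he, zero_add]
  have first : ∑ a ∈ range n, (if a = 0 then (n * (n + 1) : ℚ) else 0) = n * (n + 1) := by
    rw [sum_ite_eq']
    split_ifs with h
    · rfl
    · simp_all
  -- `d` vanishes at `n` and `d (a + 1) - d a = -4 (a + 1)`: the sum telescopes.
  have telescope : ∑ a ∈ range n, d a * (e a - e (a + 1))
      = ∑ a ∈ range n, (d (a + 1) - d a) * e (a + 1) := by
    have := shift d
    rw [sum_range_succ, show d n = 0 by simp [hd], zero_mul, add_zero] at this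
    simp only [mul_sub, sub_mul, sum_sub_distrib, this]
  have sum_S : ∑ a ∈ range (n + 1), (a : ℚ) * e a = ∑ j ∈ S, (j : ℚ) := by
    simp only [he, mul_ite, mul_one, mul_zero, sum_ite_mem]
    rw [inter_eq_right.2 (hS.trans fun x hx => by simp at hx ⊢; omega)]
  rw [sum_congr rfl fun a _ => term a, sum_add_distrib, first, telescope, ← sum_S, shift,
    mul_sum, sub_eq_add_neg, ← sum_neg_distrib]
  congr 1
  refine sum_congr rfl fun a _ => ?_
  simp only [hd]
  push_cast
  ring

def elemWeight (n j : ℕ) : ℚ := ∏ a ∈ range j, coeff n a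

-- Moving an element from `a` to `a + 1` multiplies the weight by `coeff n a`.
def weight (n : ℕ) (S : Finset ℕ) : ℚ := ∏ j ∈ S, elemWeight n j

lemma weight_pos {n : ℕ} {S : Finset ℕ} (hS : S ⊆ Icc 1 n) : 0 < weight n S :=
  prod_pos fun j hj => prod_pos fun a ha => coeff_pos <| by
    have := hS hj
    simp only [mem_range, mem_Icc] at ha this
    omega

lemma weight_eq_of_one_mem {n : ℕ} {U : Finset ℕ} (h : 1 ∈ U) :
    weight n U = coeff n 0 * weight n (U.erase 1) := by
  rw [weight, ← mul_prod_erase U _ h, elemWeight, prod_range_one]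
  rfl

lemma weight_eq_of_succ_mem {n a : ℕ} {U : Finset ℕ} (h : a + 1 ∈ U) (h' : a ∉ U) :
    weight n U = coeff n a * weight n (insert a (U.erase (a + 1))) := by
  rw [weight, weight, ← mul_prod_erase U _ h, prod_insert fun h'' => h' (mem_of_mem_erase h''),
    elemWeight, elemWeight, prod_range_succ]
  ring

def weightedInner (n : ℕ) : LinearMap.BilinForm ℚ (Finset ℕ → ℚ) :=
  LinearMap.mk₂ ℚ (fun f g => ∑ S ∈ (Icc 1 n).powerset, weight n S * (f S * g S))
    (fun _ _ _ => by simp only [Pi.add_apply, add_mul, mul_add, sum_add_distrib])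
    (fun _ _ _ => by
      simp only [Pi.smul_apply, smul_eq_mul, mul_sum]; exact sum_congr rfl fun _ _ => by ring)
    (fun _ _ _ => by simp only [Pi.add_apply, mul_add, sum_add_distrib])
    (fun _ _ _ => by
      simp only [Pi.smul_apply, smul_eq_mul, mul_sum]; exact sum_congr rfl fun _ _ => by ring)

lemma weightedInner_apply (n : ℕ) (f g : Finset ℕ → ℚ) :
    weightedInner n f g = ∑ S ∈ (Icc 1 n).powerset, weight n S * (f S * g S) := rfl

lemma weightedInner_comm (n : ℕ) (f g : Finset ℕ → ℚ) :
    weightedInner n f g = weightedInner n g f := by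
  simp only [weightedInner_apply, mul_comm (f _)]

lemma weightedInner_self_nonneg (n : ℕ) (f : Finset ℕ → ℚ) : 0 ≤ weightedInner n f f :=
  sum_nonneg fun _ hS => mul_nonneg (weight_pos (mem_powerset.1 hS)).le (mul_self_nonneg _)

lemma weightedInner_self_pos {n : ℕ} {f : Finset ℕ → ℚ} {S : Finset ℕ} (hS : S ⊆ Icc 1 n)
    (hf : f S ≠ 0) : 0 < weightedInner n f f :=
  sum_pos' (fun _ hT => mul_nonneg (weight_pos (mem_powerset.1 hT)).le (mul_self_nonneg _))
    ⟨S, mem_powerset.2 hS, mul_pos (weight_pos hS) (mul_self_pos.2 hf)⟩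

lemma weightedInner_raiseAt {n a : ℕ} (ha : a < n) (f g : Finset ℕ → ℚ) :
    weightedInner n (raiseAt a f) g = weightedInner n f (coeff n a • lowerAt a g) := by
  rw [weightedInner_apply, weightedInner_apply, raiseAt, lowerAt]
  split_ifs with ha0
  · subst ha0
    apply sum_mul_pullback
    · intro U hU h
      exact ⟨mem_powerset.2 ((erase_subset _ _).trans (mem_powerset.1 hU)), notMem_erase _ _,
        insert_erase h⟩
    · intro S hS h
      exact ⟨mem_powerset.2 (insert_subset (mem_Icc.2 ⟨le_rfl, ha⟩) (mem_powerset.1 hS)),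
        mem_insert_self _ _, erase_insert h⟩
    · exact fun U _ h => weight_eq_of_one_mem h
  · apply sum_mul_pullback
    · intro U hU h
      simp only [mem_powerset, subset_iff, mem_Icc] at hU ⊢
      refine ⟨by grind, by grind, ?_⟩
      ext x; simp only [mem_insert, mem_erase]; grind
    · intro S hS h
      simp only [mem_powerset, subset_iff, mem_Icc] at hS ⊢
      refine ⟨by grind, by grind, ?_⟩
      ext x; simp only [mem_insert, mem_erase]; grind
    · exact fun U _ h => weight_eq_of_succ_mem h.1 h.2

def raise (n : ℕ) : Module.End ℚ (Finset ℕ → ℚ) := ∑ a ∈ range n, raiseAt a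

def lower (n : ℕ) : Module.End ℚ (Finset ℕ → ℚ) := ∑ a ∈ range n, coeff n a • lowerAt a

lemma weightedInner_raise (n : ℕ) (f g : Finset ℕ → ℚ) :
    weightedInner n (raise n f) g = weightedInner n f (lower n g) := by
  simp only [raise, lower, LinearMap.coe_sum, Finset.sum_apply, map_sum]
  exact sum_congr rfl fun a ha => weightedInner_raiseAt (mem_range.1 ha) f g

lemma lower_mul_raise_sub_apply {n : ℕ} {S : Finset ℕ} (hS : S ⊆ Icc 1 n) (f : Finset ℕ → ℚ) :
    (lower n * raise n - raise n * lower n) f S = (n * (n + 1) - 4 * ∑ j ∈ S, (j : ℚ)) * f S := by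
  rw [lower, raise, sum_mul_sum_sub_sum_mul_sum _ _ _
    fun b _ a _ hba => (commute_lowerAt_raiseAt hba).smul_left _, ← sum_coeff_mul_moveBalance hS]
  simp only [LinearMap.coe_sum, Finset.sum_apply, sum_mul]
  refine sum_congr rfl fun a _ => ?_
  have := lowerAt_mul_raiseAt_sub_apply a f S
  simp only [LinearMap.sub_apply, Module.End.mul_apply, Pi.sub_apply] at this
  simp only [LinearMap.sub_apply, Module.End.mul_apply, LinearMap.smul_apply, map_smul,
    Pi.sub_apply, Pi.smul_apply, smul_eq_mul]
  rw [← mul_sub, this, mul_assoc]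

def level (n k : ℕ) : Finset (Finset ℕ) := (Icc 1 n).powerset.filter (fun s => s.sum id = k)

lemma raiseAt_apply_eq_zero {n k a : ℕ} (ha : a < n) {F : Finset ℕ → ℚ}
    (hF : ∀ S ∉ level n k, F S = 0) {U : Finset ℕ} (hU : U ∉ level n (k + 1)) :
    raiseAt a F U = 0 := by
  by_contra hne
  apply hU
  simp only [raiseAt] at hne
  split_ifs at hne with ha0 <;> obtain ⟨h, hne⟩ := ite_ne_right_iff.1 hne
  · have hV := not_not.1 (mt (hF _) hne)
    simp only [level, mem_filter, mem_powerset] at hV ⊢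
    refine ⟨?_, ?_⟩
    · rw [← insert_erase h]
      exact insert_subset (mem_Icc.2 ⟨le_rfl, by omega⟩) hV.1
    · rw [← add_sum_erase _ _ h, hV.2, id, add_comm]
  · have hV := not_not.1 (mt (hF _) hne)
    simp only [level, mem_filter, mem_powerset] at hV ⊢
    have ha' : a ∉ U.erase (a + 1) := fun h' => h.2 (mem_of_mem_erase h')
    refine ⟨?_, ?_⟩
    · rw [← insert_erase h.1]
      exact insert_subset (mem_Icc.2 ⟨by omega, by omega⟩)
        ((subset_insert _ _).trans hV.1)
    · rw [sum_insert ha'] at hV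
      rw [← add_sum_erase _ _ h.1, ← hV.2, id, id]
      ring

lemma raise_apply_eq_zero {n k : ℕ} {F : Finset ℕ → ℚ} (hF : ∀ S ∉ level n k, F S = 0)
    {U : Finset ℕ} (hU : U ∉ level n (k + 1)) : raise n F U = 0 := by
  simp only [raise, LinearMap.coe_sum, Finset.sum_apply]
  exact sum_eq_zero fun a ha => raiseAt_apply_eq_zero (mem_range.1 ha) hF hU

lemma weightedInner_raise_self {n k : ℕ} {F : Finset ℕ → ℚ} (hF : ∀ S ∉ level n k, F S = 0) :
    weightedInner n (raise n F) (raise n F)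
      = weightedInner n (lower n F) (lower n F) + (n * (n + 1) - 4 * k) * weightedInner n F F := by
  have commutator : weightedInner n F ((lower n * raise n - raise n * lower n) F)
      = (n * (n + 1) - 4 * k) * weightedInner n F F := by
    simp only [weightedInner_apply, mul_sum]
    refine sum_congr rfl fun S hS => ?_
    rw [lower_mul_raise_sub_apply (mem_powerset.1 hS)]
    by_cases hFS : F S = 0
    · simp [hFS]
    · have hSk : S ∈ level n k := by_contra fun h => hFS (hF S h)
      rw [← (mem_filter.1 hSk).2, Nat.cast_sum]
      simp only [id]
      ring
  calc weightedInner n (raise n F) (raise n F)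
      = weightedInner n F (lower n (raise n F)) := weightedInner_raise n _ _
    _ = weightedInner n F (raise n (lower n F))
          + weightedInner n F ((lower n * raise n - raise n * lower n) F) := by
        rw [← map_add]
        simp
    _ = _ := by rw [commutator, weightedInner_comm, weightedInner_raise]

lemma eq_zero_of_raise_eq_zero {n k : ℕ} (hk : 4 * k < n * (n + 1)) {F : Finset ℕ → ℚ}
    (hF : ∀ S ∉ level n k, F S = 0) (hX : ∀ U ∈ level n (k + 1), raise n F U = 0) (S : Finset ℕ) :
    F S = 0 := by
  by_contra hS
  have hSk : S ∈ level n k := by_contra fun h => hS (hF S h)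
  have hXF : raise n F = 0 := funext fun U => by
    by_cases hU : U ∈ level n (k + 1)
    · exact hX U hU
    · exact raise_apply_eq_zero hF hU
  have hk' : (0 : ℚ) < n * (n + 1) - 4 * k := by
    have : ((4 * k : ℕ) : ℚ) < (n * (n + 1) : ℕ) := by exact_mod_cast hk
    push_cast at this
    linarith
  have := weightedInner_raise_self hF
  rw [hXF, map_zero] at this
  nlinarith [weightedInner_self_nonneg n (lower n F),
    weightedInner_self_pos (mem_powerset.1 (mem_filter.1 hSk).1) hS]

lemma card_level_le_succ {n k : ℕ} (hk : 4 * k < n * (n + 1)) :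
    #(level n k) ≤ #(level n (k + 1)) := by
  let Φ : (level n k → ℚ) →ₗ[ℚ] (level n (k + 1) → ℚ) :=
    LinearMap.funLeft ℚ ℚ Subtype.val ∘ₗ raise n ∘ₗ Function.ExtendByZero.linearMap ℚ Subtype.val
  have hΦ : Function.Injective Φ := by
    rw [← LinearMap.ker_eq_bot, LinearMap.ker_eq_bot']
    intro f hf
    have hF : ∀ S ∉ level n k, Function.extend Subtype.val f 0 S = 0 := fun S hS =>
      Function.extend_apply' _ _ _ fun ⟨T, hT⟩ => hS (hT ▸ T.2)
    have hX : ∀ U ∈ level n (k + 1), raise n (Function.extend Subtype.val f 0) U = 0 :=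
      fun U hU => congrFun hf ⟨U, hU⟩
    funext S
    rw [← Subtype.val_injective.extend_apply f 0 S]
    exact eq_zero_of_raise_eq_zero hk hF hX S
  simpa [Module.finrank_fintype_fun_eq_card] using LinearMap.finrank_le_finrank_of_injective hΦ

lemma card_level_mono {n k l : ℕ} (hkl : k ≤ l) (hl : 4 * l ≤ n * (n + 1)) :
    #(level n k) ≤ #(level n l) := by
  induction l, hkl using Nat.le_induction with
  | base => exact le_rfl
  | succ l _ ih => exact (ih (by omega)).trans (card_level_le_succ (by omega))

lemma sum_Icc_id_mul_two (n : ℕ) : (Icc 1 n).sum id * 2 = n * (n + 1) := by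
  induction n with
  | zero => rfl
  | succ n ih =>
    rw [sum_Icc_succ_top (by omega), add_mul, ih, id]
    ring

lemma card_level_sub {n k : ℕ} (hk : k ≤ (Icc 1 n).sum id) :
    #(level n ((Icc 1 n).sum id - k)) = #(level n k) := by
  have compl_mem : ∀ {k S}, k ≤ (Icc 1 n).sum id → S ∈ level n k →
      Icc 1 n \ S ∈ level n ((Icc 1 n).sum id - k) := by
    intro k S hk hS
    simp only [level, mem_filter, mem_powerset] at hS ⊢
    have : (Icc 1 n \ S).sum id + S.sum id = (Icc 1 n).sum id := sum_sdiff hS.1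
    exact ⟨sdiff_subset, by omega⟩
  refine card_nbij' (Icc 1 n \ ·) (Icc 1 n \ ·) (fun S hS => ?_) (fun _ hS => compl_mem hk hS)
    (fun S hS => ?_) (fun S hS => ?_)
  · have := compl_mem (Nat.sub_le _ k) hS
    rwa [Nat.sub_sub_self hk] at this
  · exact Finset.sdiff_sdiff_eq_self (mem_powerset.1 (mem_filter.1 hS).1)
  · exact Finset.sdiff_sdiff_eq_self (mem_powerset.1 (mem_filter.1 hS).1)

lemma level_eq_empty {n k : ℕ} (hk : (Icc 1 n).sum id < k) : level n k = ∅ :=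
  filter_eq_empty_iff.2 fun _ hS h =>
    (h ▸ hk).not_ge (sum_le_sum_of_subset (f := id) (mem_powerset.1 hS))

lemma levelCard_le_middle (n K : ℕ) : levelCard n K ≤ levelCard n (n * (n + 1) / 4) := by
  change #(level n K) ≤ #(level n _)
  have hT := sum_Icc_id_mul_two n
  set T := (Icc 1 n).sum id
  set N := n * (n + 1)
  rcases le_or_gt K (N / 4) with hK | hK
  · exact card_level_mono hK (by omega)
  rcases le_or_gt K T with hKT | hKT
  · rw [← card_level_sub hKT]
    exact card_level_mono (by omega) (by omega)
  · rw [level_eq_empty hKT]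
    exact Nat.zero_le _

end SubsetSum

theorem stmt10_general (n : ℕ) : M n = levelCard n (n * (n + 1) / 4) :=
  le_antisymm (ciSup_le (SubsetSum.levelCard_le_middle n))
    (le_ciSup ⟨_, Set.forall_mem_range.2 (SubsetSum.levelCard_le_middle n)⟩ _)

/-- For `n ≥ 1`, `M n` is attained at the middle rank: `M n` equals the number
of subsets of `{1,…,n}` whose elements sum to `⌊n(n+1)/4⌋`. -/
theorem stmt10 (n : ℕ) (hn : 1 ≤ n) : M n = levelCard n (n * (n + 1) / 4) :=
  stmt10_general n
end

section
/- M(n) satisfies the asymptotic formula M(n) = √(6/π) · 2^n / n^{3/2} · (1 + o(1)) as n → ∞; equivalently, the sequence M(n) · n^{3/2} / 2^n converges to √(6/π). -/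
open Real Filter MeasureTheory Finset Topology
open scoped Complex
open Complex (I)

lemma abs_cos_le_exp_neg_sin_sq (x : ℝ) : |cos x| ≤ exp (-sin x ^ 2 / 2) := by
  have h : cos x ^ 2 ≤ exp (-sin x ^ 2 / 2) ^ 2 := by
    rw [← exp_nat_mul, cos_sq',
      show ((2 : ℕ) : ℝ) * (-sin x ^ 2 / 2) = -sin x ^ 2 by push_cast; ring]
    linarith [add_one_le_exp (-sin x ^ 2)]
  exact (sq_le_sq.1 h).trans_eq (abs_of_pos (exp_pos _))

lemma abs_cos_le_exp_neg_sq (x : ℝ) (hx : |x| ≤ π / 2) : |cos x| ≤ exp (-2 * x ^ 2 / π ^ 2) := by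
  have hjordan : (2 / π * |x|) ^ 2 ≤ sin x ^ 2 := by
    rw [← sq_abs (sin x)]
    exact pow_le_pow_left₀ (by positivity) (mul_abs_le_abs_sin hx) 2
  refine (abs_cos_le_exp_neg_sin_sq x).trans (exp_le_exp.2 ?_)
  have : (2 / π * |x|) ^ 2 / 2 = -(-2 * x ^ 2 / π ^ 2) := by
    rw [mul_pow, sq_abs]; ring
  linarith

lemma cos_le_exp_of_abs_le {x : ℝ} (hx : |x| ≤ 1 / 2) : cos x ≤ exp (-(x ^ 2 / 2) + x ^ 4) := by
  have hb := abs_le.1 (cos_bound (hx.trans (by norm_num)))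
  have h4 : |x| ^ 4 = x ^ 4 := by rw [← abs_pow, abs_of_nonneg (by positivity)]
  nlinarith [add_one_le_exp (-(x ^ 2 / 2) + x ^ 4), sq_nonneg x, sq_nonneg (x ^ 2)]

lemma exp_le_cos_of_abs_le {x : ℝ} (hx : |x| ≤ 1 / 2) : exp (-(x ^ 2 / 2) - x ^ 4) ≤ cos x := by
  have hb := abs_le.1 (cos_bound (hx.trans (by norm_num)))
  have h4 : |x| ^ 4 = x ^ 4 := by rw [← abs_pow, abs_of_nonneg (by positivity)]
  have hx2 : x ^ 2 ≤ 1 / 4 := by nlinarith [sq_abs x, abs_nonneg x]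
  have hexp : exp (-(x ^ 2 / 2) - x ^ 4) * (1 + (x ^ 2 / 2 + x ^ 4)) ≤ 1 := by
    rw [show -(x ^ 2 / 2) - x ^ 4 = -(x ^ 2 / 2 + x ^ 4) by ring, exp_neg,
      inv_mul_le_iff₀ (exp_pos _), mul_one]
    linarith [add_one_le_exp (x ^ 2 / 2 + x ^ 4)]
  have hpoly : 1 ≤ (1 - x ^ 2 / 2 - 5 / 96 * x ^ 4) * (1 + (x ^ 2 / 2 + x ^ 4)) := by
    nlinarith [sq_nonneg x, sq_nonneg (x ^ 2), mul_nonneg (sq_nonneg x) (sq_nonneg (x ^ 2))]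
  have hpos : 0 < 1 + (x ^ 2 / 2 + x ^ 4) := by positivity
  nlinarith [exp_pos (-(x ^ 2 / 2) - x ^ 4)]

lemma prod_cos_mem_Icc {ι : Type*} (s : Finset ι) (x : ι → ℝ) (hx : ∀ i ∈ s, |x i| ≤ 1 / 2) :
    ∏ i ∈ s, cos (x i) ∈ Set.Icc (exp (-(∑ i ∈ s, x i ^ 2 / 2) - ∑ i ∈ s, x i ^ 4))
      (exp (-(∑ i ∈ s, x i ^ 2 / 2) + ∑ i ∈ s, x i ^ 4)) := by
  have hcos_nonneg : ∀ i ∈ s, 0 ≤ cos (x i) := fun i hi =>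
    cos_nonneg_of_mem_Icc (abs_le.1 ((hx i hi).trans (by linarith [pi_gt_three])))
  constructor
  · rw [← sum_neg_distrib, ← sum_sub_distrib, exp_sum]
    exact prod_le_prod (fun i _ => (exp_pos _).le) fun i hi => exp_le_cos_of_abs_le (hx i hi)
  · rw [← sum_neg_distrib, ← sum_add_distrib, exp_sum]
    exact prod_le_prod hcos_nonneg fun i hi => cos_le_exp_of_abs_le (hx i hi)

noncomputable def cosProd (n : ℕ) (θ : ℝ) : ℝ := ∏ k ∈ Icc 1 n, cos (k * θ / 2)

@[fun_prop]
lemma continuous_cosProd (n : ℕ) : Continuous (cosProd n) := by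
  unfold cosProd
  fun_prop

lemma abs_prod_le_abs_prod_of_subset {ι : Type*} [DecidableEq ι] {s t : Finset ι} (hst : s ⊆ t)
    {f : ι → ℝ} (hf : ∀ i ∈ t, |f i| ≤ 1) : |∏ i ∈ t, f i| ≤ |∏ i ∈ s, f i| := by
  rw [abs_prod, abs_prod, ← prod_sdiff hst]
  exact mul_le_of_le_one_left (prod_nonneg fun _ _ => abs_nonneg _)
    (prod_le_one (fun _ _ => abs_nonneg _) fun i hi => hf i (sdiff_subset hi))

lemma sum_Icc_id_eq (n : ℕ) : ∑ k ∈ Icc 1 n, (k : ℝ) = n * (n + 1) / 2 := by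
  induction n with
  | zero => simp
  | succ n ih =>
    rw [sum_Icc_succ_top (by omega), ih]
    push_cast; ring

lemma sum_Icc_sq_eq (n : ℕ) : ∑ k ∈ Icc 1 n, (k : ℝ) ^ 2 = n * (n + 1) * (2 * n + 1) / 6 := by
  induction n with
  | zero => simp
  | succ n ih =>
    rw [sum_Icc_succ_top (by omega), ih]
    push_cast; ring

lemma abs_cosProd_le_of_abs_le {n : ℕ} {θ : ℝ} (hn : 3 ≤ n) (hθ : |θ| ≤ 2 * π / n) :
    |cosProd n θ| ≤ exp (-(n ^ 3 * θ ^ 2) / (162 * π ^ 2)) := by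
  have hn0 : (0 : ℝ) < n := by positivity
  -- Keep only the factors with `k ≤ n / 2`: their arguments lie in `[-π/2, π/2]`, where
  -- Jordan's inequality bounds `|sin|` from below.
  set K := n / 2
  have hK3 : (n : ℝ) ≤ 3 * K := by exact_mod_cast (by omega : n ≤ 3 * K)
  have hK2 : 2 * (K : ℝ) ≤ n := by exact_mod_cast (by omega : 2 * K ≤ n)
  have hfactor : ∀ k ∈ Icc 1 K, |cos (k * θ / 2)| ≤ exp (-(θ ^ 2 / (2 * π ^ 2)) * k ^ 2) := by
    intro k hk
    have hkK : (k : ℝ) ≤ K := by exact_mod_cast (mem_Icc.1 hk).2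
    have hsmall : |k * θ / 2| ≤ π / 2 := by
      rw [abs_div, abs_mul, Nat.abs_cast, abs_two]
      calc k * |θ| / 2 ≤ K * (2 * π / n) / 2 := by gcongr
        _ ≤ π / 2 := by
          rw [div_le_div_iff_of_pos_right two_pos, mul_div_assoc', div_le_iff₀ hn0]
          nlinarith [pi_pos]
    refine (abs_cos_le_exp_neg_sq _ hsmall).trans_eq ?_
    congr 1
    ring
  have hsum : (n : ℝ) ^ 3 / 81 ≤ ∑ k ∈ Icc 1 K, (k : ℝ) ^ 2 := by
    rw [sum_Icc_sq_eq]
    have : (n : ℝ) ^ 3 ≤ (3 * K) ^ 3 := pow_le_pow_left₀ hn0.le hK3 3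
    nlinarith [(K.cast_nonneg : (0 : ℝ) ≤ K)]
  calc |cosProd n θ| ≤ |∏ k ∈ Icc 1 K, cos (k * θ / 2)| :=
        abs_prod_le_abs_prod_of_subset (Icc_subset_Icc_right (by omega))
          fun _ _ => abs_cos_le_one _
    _ = ∏ k ∈ Icc 1 K, |cos (k * θ / 2)| := abs_prod _ _
    _ ≤ ∏ k ∈ Icc 1 K, exp (-(θ ^ 2 / (2 * π ^ 2)) * k ^ 2) :=
        prod_le_prod (fun _ _ => abs_nonneg _) hfactor
    _ = exp (-(θ ^ 2 / (2 * π ^ 2)) * ∑ k ∈ Icc 1 K, (k : ℝ) ^ 2) := by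
        rw [← exp_sum, mul_sum]
    _ ≤ exp (-(n ^ 3 * θ ^ 2) / (162 * π ^ 2)) := by
        refine exp_le_exp.2 ?_
        calc -(θ ^ 2 / (2 * π ^ 2)) * ∑ k ∈ Icc 1 K, (k : ℝ) ^ 2
            ≤ -(θ ^ 2 / (2 * π ^ 2)) * (n ^ 3 / 81) := by
              rw [neg_mul, neg_mul, neg_le_neg_iff]; gcongr
          _ = -(n ^ 3 * θ ^ 2) / (162 * π ^ 2) := by ring

lemma sin_mul_sum_cos_two_mul (n : ℕ) (t : ℝ) :
    sin t * ∑ k ∈ Icc 1 n, cos (2 * k * t) = (sin ((2 * n + 1) * t) - sin t) / 2 := by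
  induction n with
  | zero => simp
  | succ n ih =>
    rw [sum_Icc_succ_top (by omega), mul_add, ih]
    push_cast
    rw [show (2 * (n : ℝ) + 1) * t = 2 * (n + 1) * t - t by ring,
      show (2 * ((n : ℝ) + 1) + 1) * t = 2 * (n + 1) * t + t by ring, sin_add, sin_sub]
    ring

lemma abs_cosProd_le_exp_neg_sum_sin_sq (n : ℕ) (θ : ℝ) :
    |cosProd n θ| ≤ exp (-(∑ k ∈ Icc 1 n, sin (k * θ / 2) ^ 2) / 2) := by
  rw [cosProd, abs_prod, ← sum_neg_distrib, sum_div, exp_sum]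
  exact prod_le_prod (fun _ _ => abs_nonneg _) fun k _ => by
    simpa [neg_div] using abs_cos_le_exp_neg_sin_sq (k * θ / 2)

lemma abs_cosProd_le_of_le_abs {n : ℕ} {θ : ℝ} (hn : 1 ≤ n) (h₁ : 2 * π / n ≤ |θ|)
    (h₂ : |θ| ≤ π) : |cosProd n θ| ≤ exp (-n / 8) := by
  have hn0 : (0 : ℝ) < n := by exact_mod_cast hn
  set t := θ / 2
  have hsin : 2 / n ≤ |sin t| := by
    refine le_trans ?_ (mul_abs_le_abs_sin (by rw [abs_div, abs_two]; linarith))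
    rw [abs_div, abs_two, show 2 / π * (|θ| / 2) = |θ| / π by field_simp,
      le_div_iff₀ pi_pos, div_mul_eq_mul_div, mul_comm]
    linarith [show π * 2 / n = 2 * π / n by ring]
  set D := ∑ k ∈ Icc 1 n, cos (2 * k * t)
  have hD : |sin t| * |D| ≤ 1 := by
    rw [← abs_mul, sin_mul_sum_cos_two_mul, abs_div, abs_two]
    have := abs_sub (sin ((2 * n + 1) * t)) (sin t)
    linarith [abs_sin_le_one ((2 * n + 1) * t), abs_sin_le_one t]
  have hDn : D ≤ n / 2 := by
    have h2 : 2 / n * |D| ≤ 1 := (mul_le_mul_of_nonneg_right hsin (abs_nonneg D)).trans hD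
    rw [div_mul_eq_mul_div, div_le_one hn0] at h2
    linarith [le_abs_self D]
  have hsum : ∑ k ∈ Icc 1 n, sin (k * θ / 2) ^ 2 = n / 2 - D / 2 := by
    have hterm : ∀ k ∈ Icc 1 n, sin (k * θ / 2) ^ 2 = 1 / 2 - cos (2 * k * t) / 2 := fun k _ => by
      rw [sin_sq_eq_half_sub, show 2 * ((k : ℝ) * θ / 2) = 2 * k * t by ring]
    rw [sum_congr rfl hterm, sum_sub_distrib, sum_const, Nat.card_Icc, ← sum_div, nsmul_eq_mul,
      Nat.add_sub_cancel]
    ring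
  refine (abs_cosProd_le_exp_neg_sum_sin_sq n θ).trans (exp_le_exp.2 ?_)
  rw [hsum]
  linarith

lemma rpow_three_halves_sq {x : ℝ} (hx : 0 ≤ x) : (x ^ ((3 : ℝ) / 2)) ^ 2 = x ^ 3 := by
  rw [← rpow_natCast, ← rpow_mul hx]
  norm_num

lemma cosProd_div_rpow_mem_Icc {n : ℕ} {s : ℝ} (hn : 1 ≤ n) (hs : s ^ 2 ≤ n) :
    cosProd n (s / (n : ℝ) ^ ((3 : ℝ) / 2)) ∈ Set.Icc
      (exp (-(s ^ 2 / 48 * ((1 + 1 / n) * (2 + 1 / n))) - s ^ 4 / 16 * (1 / n)))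
      (exp (-(s ^ 2 / 48 * ((1 + 1 / n) * (2 + 1 / n))) + s ^ 4 / 16 * (1 / n))) := by
  have hn0 : (0 : ℝ) < n := by exact_mod_cast hn
  set θ := s / (n : ℝ) ^ ((3 : ℝ) / 2)
  have hθ : θ ^ 2 = s ^ 2 / n ^ 3 := by rw [div_pow, rpow_three_halves_sq hn0.le]
  have hterm : ∀ k ∈ Icc 1 n, ((k : ℝ) * θ / 2) ^ 2 ≤ s ^ 2 / (4 * n) := by
    intro k hk
    have hkn : (k : ℝ) ^ 2 ≤ (n : ℝ) ^ 2 :=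
      pow_le_pow_left₀ k.cast_nonneg (by exact_mod_cast (mem_Icc.1 hk).2) 2
    calc ((k : ℝ) * θ / 2) ^ 2 = k ^ 2 * (s ^ 2 / (4 * n ^ 3)) := by
          rw [div_pow, mul_pow, hθ]; ring
      _ ≤ n ^ 2 * (s ^ 2 / (4 * n ^ 3)) := by gcongr
      _ = s ^ 2 / (4 * n) := by field_simp
  have hsmall : ∀ k ∈ Icc 1 n, |(k : ℝ) * θ / 2| ≤ 1 / 2 := by
    intro k hk
    have : ((k : ℝ) * θ / 2) ^ 2 ≤ (1 / 2) ^ 2 := by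
      refine (hterm k hk).trans ?_
      rw [div_le_iff₀ (by positivity)]
      linarith
    simpa using sq_le_sq.1 this
  have hquad : ∑ k ∈ Icc 1 n, ((k : ℝ) * θ / 2) ^ 2 / 2
      = s ^ 2 / 48 * ((1 + 1 / n) * (2 + 1 / n)) := by
    rw [show ∑ k ∈ Icc 1 n, ((k : ℝ) * θ / 2) ^ 2 / 2 = θ ^ 2 / 8 * ∑ k ∈ Icc 1 n, (k : ℝ) ^ 2 by
      rw [mul_sum]; exact sum_congr rfl fun k _ => by ring, sum_Icc_sq_eq, hθ]
    field_simp
    ring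
  have hquart : ∑ k ∈ Icc 1 n, ((k : ℝ) * θ / 2) ^ 4 ≤ s ^ 4 / 16 * (1 / n) := by
    calc ∑ k ∈ Icc 1 n, ((k : ℝ) * θ / 2) ^ 4
        ≤ ∑ k ∈ Icc 1 n, (s ^ 2 / (4 * n)) ^ 2 := sum_le_sum fun k hk => by
          rw [show ((k : ℝ) * θ / 2) ^ 4 = (((k : ℝ) * θ / 2) ^ 2) ^ 2 by ring]
          exact pow_le_pow_left₀ (sq_nonneg _) (hterm k hk) 2
      _ = s ^ 4 / 16 * (1 / n) := by
          rw [sum_const, Nat.card_Icc, Nat.add_sub_cancel, nsmul_eq_mul]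
          field_simp
          norm_num
  have hquart0 : 0 ≤ ∑ k ∈ Icc 1 n, ((k : ℝ) * θ / 2) ^ 4 := by positivity
  obtain ⟨hlo, hhi⟩ := prod_cos_mem_Icc (Icc 1 n) (fun k => (k : ℝ) * θ / 2) hsmall
  rw [hquad] at hlo hhi
  exact ⟨(exp_le_exp.2 (by linarith)).trans hlo, hhi.trans (exp_le_exp.2 (by linarith))⟩

lemma tendsto_cosProd_div_rpow (s : ℝ) :
    Tendsto (fun n : ℕ => cosProd n (s / (n : ℝ) ^ ((3 : ℝ) / 2))) atTop
      (𝓝 (exp (-s ^ 2 / 24))) := by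
  have h1n : Tendsto (fun n : ℕ => 1 / (n : ℝ)) atTop (𝓝 0) := tendsto_one_div_atTop_nhds_zero_nat
  have hquad : Tendsto (fun n : ℕ => -(s ^ 2 / 48 * ((1 + 1 / n) * (2 + 1 / n)))) atTop
      (𝓝 (-s ^ 2 / 24)) := by
    convert ((((tendsto_const_nhds (x := (1 : ℝ))).add h1n).mul
      ((tendsto_const_nhds (x := (2 : ℝ))).add h1n)).const_mul (s ^ 2 / 48)).neg using 2
    ring
  have hquart : Tendsto (fun n : ℕ => s ^ 4 / 16 * (1 / n)) atTop (𝓝 0) := by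
    simpa using h1n.const_mul (s ^ 4 / 16)
  have hbounds := ((eventually_ge_atTop 1).and (eventually_ge_atTop ⌈s ^ 2⌉₊)).mono
    fun n hn => cosProd_div_rpow_mem_Icc (s := s) hn.1
      ((Nat.le_ceil _).trans (by exact_mod_cast hn.2))
  exact tendsto_of_tendsto_of_tendsto_of_le_of_le'
    (by simpa using (hquad.sub hquart).rexp) (by simpa using (hquad.add hquart).rexp)
    (hbounds.mono fun _ h => h.1) (hbounds.mono fun _ h => h.2)

lemma tendsto_div_rpow_three_halves (s : ℝ) :
    Tendsto (fun n : ℕ => s / (n : ℝ) ^ ((3 : ℝ) / 2)) atTop (𝓝 0) :=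
  tendsto_const_nhds.div_atTop ((tendsto_rpow_atTop (by norm_num)).comp tendsto_natCast_atTop_atTop)

lemma tendsto_cos_mul_div_rpow {c : ℕ → ℝ} (hc : ∀ n, |c n| ≤ 1) (s : ℝ) :
    Tendsto (fun n : ℕ => cos (c n * (s / (n : ℝ) ^ ((3 : ℝ) / 2)))) atTop (𝓝 1) := by
  have h0 : Tendsto (fun n : ℕ => c n * (s / (n : ℝ) ^ ((3 : ℝ) / 2))) atTop (𝓝 0) := by
    refine squeeze_zero_norm (a := fun n : ℕ => ‖s / (n : ℝ) ^ ((3 : ℝ) / 2)‖) (fun n => ?_)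
      (by simpa using (tendsto_div_rpow_three_halves s).norm)
    rw [norm_mul]
    exact mul_le_of_le_one_left (norm_nonneg _) (hc n)
  simpa [Function.comp_def] using (continuous_cos.tendsto 0).comp h0

lemma tendsto_mul_intervalIntegral_of_dominated {F : ℕ → ℝ → ℝ} {a r : ℕ → ℝ} {f bound : ℝ → ℝ}
    (hF : ∀ n, Measurable (F n)) (ha : ∀ᶠ n in atTop, 0 < a n)
    (har : Tendsto (fun n => a n * r n) atTop atTop)
    (hbound : ∀ᶠ n in atTop, ∀ s, |s| ≤ a n * r n → |F n (s / a n)| ≤ bound s)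
    (hbound_nonneg : ∀ s, 0 ≤ bound s) (hbound_int : Integrable bound)
    (hlim : ∀ s, Tendsto (fun n => F n (s / a n)) atTop (𝓝 (f s))) :
    Tendsto (fun n => a n * ∫ θ in -r n..r n, F n θ) atTop (𝓝 (∫ s, f s)) := by
  set G : ℕ → ℝ → ℝ := fun n =>
    (Set.Ioc (-(a n * r n)) (a n * r n)).indicator fun s => F n (s / a n)
  have hG : ∀ᶠ n in atTop, ∫ s, G n s = a n * ∫ θ in -r n..r n, F n θ := by
    filter_upwards [ha, har.eventually_ge_atTop 0] with n han hrn
    rw [integral_indicator measurableSet_Ioc, ← intervalIntegral.integral_of_le (by linarith),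
      intervalIntegral.integral_comp_div (F n) han.ne', smul_eq_mul, neg_div,
      mul_div_cancel_left₀ _ han.ne']
  refine (tendsto_integral_filter_of_dominated_convergence bound ?_ ?_ hbound_int ?_).congr' hG
  · exact .of_forall fun n =>
      ((hF n).comp (measurable_id.div_const _)).aestronglyMeasurable.indicator measurableSet_Ioc
  · filter_upwards [hbound] with n hn
    refine ae_of_all _ fun s => ?_
    simp only [G]
    by_cases hs : s ∈ Set.Ioc (-(a n * r n)) (a n * r n)
    · rw [Set.indicator_of_mem hs, norm_eq_abs]
      exact hn s (abs_le.2 ⟨hs.1.le, hs.2⟩)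
    · rw [Set.indicator_of_notMem hs, norm_zero]
      exact hbound_nonneg s
  · refine ae_of_all _ fun s => (hlim s).congr' ?_
    filter_upwards [har.eventually_gt_atTop |s|] with n hn
    simp only [G]
    rw [Set.indicator_of_mem (show s ∈ Set.Ioc (-(a n * r n)) (a n * r n) from
      ⟨by linarith [neg_abs_le s], (le_abs_self s).trans hn.le⟩)]

lemma abs_intervalIntegral_sub_le {F : ℝ → ℝ} {r R C : ℝ}
    (hF : IntervalIntegrable F volume (-R) R) (hr : 0 ≤ r) (hrR : r ≤ R)
    (hC : ∀ θ, r ≤ |θ| → |θ| ≤ R → |F θ| ≤ C) :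
    |(∫ θ in -R..R, F θ) - ∫ θ in -r..r, F θ| ≤ 2 * R * C := by
  have hint : ∀ a b, a ∈ Set.uIcc (-R) R → b ∈ Set.uIcc (-R) R → IntervalIntegrable F volume a b :=
    fun a b ha hb => hF.mono_set (Set.uIcc_subset_uIcc ha hb)
  have hmem : ∀ x, -R ≤ x → x ≤ R → x ∈ Set.uIcc (-R) R := fun x h₁ h₂ =>
    Set.mem_uIcc.2 (.inl ⟨h₁, h₂⟩)
  have h₁ := hmem (-R) le_rfl (by linarith)
  have h₂ := hmem (-r) (by linarith) (by linarith)
  have h₃ := hmem r (by linarith) hrR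
  have h₄ := hmem R (by linarith) le_rfl
  rw [← intervalIntegral.integral_add_adjacent_intervals (hint _ _ h₁ h₂) (hint _ _ h₂ h₄),
    ← intervalIntegral.integral_add_adjacent_intervals (hint _ _ h₂ h₃) (hint _ _ h₃ h₄),
    add_sub_assoc, add_sub_cancel_left]
  have hleft : ‖∫ θ in -R..-r, F θ‖ ≤ C * |-r - -R| :=
    intervalIntegral.norm_integral_le_of_norm_le_const (f := F) fun θ hθ => by
      rw [Set.uIoc_of_le (show -R ≤ -r by linarith)] at hθ
      have hθ0 : |θ| = -θ := abs_of_nonpos (by linarith [hθ.2])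
      exact hC θ (by linarith [hθ.2]) (by linarith [hθ.1])
  have hright : ‖∫ θ in r..R, F θ‖ ≤ C * |R - r| :=
    intervalIntegral.norm_integral_le_of_norm_le_const (f := F) fun θ hθ => by
      rw [Set.uIoc_of_le hrR] at hθ
      have hθ0 : |θ| = θ := abs_of_pos (by linarith [hθ.1])
      exact hC θ (by linarith [hθ.1]) (by linarith [hθ.2])
  have hC0 : 0 ≤ C := (abs_nonneg _).trans (hC R (by rwa [abs_of_nonneg (hr.trans hrR)])
    (abs_of_nonneg (hr.trans hrR)).le)
  rw [norm_eq_abs, abs_of_nonneg (by linarith : 0 ≤ -r - -R)] at hleft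
  rw [norm_eq_abs, abs_of_nonneg (by linarith : 0 ≤ R - r)] at hright
  nlinarith [abs_add_le (∫ θ in -R..-r, F θ) (∫ θ in r..R, F θ)]

lemma tendsto_rpow_mul_integral_near_zero {F : ℕ → ℝ → ℝ}
    (hF : ∀ n, Measurable (F n)) (hle : ∀ n θ, |F n θ| ≤ |cosProd n θ|)
    (hlim : ∀ s, Tendsto (fun n : ℕ => F n (s / (n : ℝ) ^ ((3 : ℝ) / 2))) atTop
      (𝓝 (exp (-s ^ 2 / 24)))) :
    Tendsto (fun n : ℕ => (n : ℝ) ^ ((3 : ℝ) / 2) * ∫ θ in -(2 * π / n)..(2 * π / n), F n θ)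
      atTop (𝓝 (√(24 * π))) := by
  have hgauss : ∫ s : ℝ, exp (-s ^ 2 / 24) = √(24 * π) := by
    convert integral_gaussian (1 / 24) using 4
    · ring
    · field_simp
  have hsqrt : Tendsto (fun n : ℕ => 2 * π * (n : ℝ) ^ ((1 : ℝ) / 2)) atTop atTop :=
    ((tendsto_rpow_atTop (by norm_num)).comp tendsto_natCast_atTop_atTop).const_mul_atTop
      (by positivity)
  rw [← hgauss]
  refine tendsto_mul_intervalIntegral_of_dominated
    (bound := fun s => exp (-(1 / (162 * π ^ 2)) * s ^ 2)) hF ?_ ?_ ?_ (fun s => (exp_pos _).le)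
    (integrable_exp_neg_mul_sq (by positivity)) hlim
  · filter_upwards [eventually_ge_atTop 1] with n hn
    positivity
  · refine hsqrt.congr' ?_
    filter_upwards [eventually_ge_atTop 1] with n hn
    have hn0 : (n : ℝ) ≠ 0 := by positivity
    rw [show (3 : ℝ) / 2 = 1 / 2 + 1 by norm_num, rpow_add (by positivity), rpow_one]
    field_simp
  · filter_upwards [eventually_ge_atTop 3] with n hn s hs
    have hn0 : (0 : ℝ) < n := by positivity
    have hθ : |s / (n : ℝ) ^ ((3 : ℝ) / 2)| ≤ 2 * π / n := by
      rw [abs_div, abs_of_pos (show (0 : ℝ) < (n : ℝ) ^ ((3 : ℝ) / 2) by positivity),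
        div_le_iff₀ (by positivity), mul_comm]
      exact hs
    refine (hle _ _).trans ((abs_cosProd_le_of_abs_le hn hθ).trans_eq ?_)
    rw [div_pow, rpow_three_halves_sq hn0.le]
    field_simp

lemma tendsto_rpow_mul_integral_sub_integral_near_zero {F : ℕ → ℝ → ℝ}
    (hF : ∀ n, Continuous (F n)) (hle : ∀ n θ, |F n θ| ≤ |cosProd n θ|) :
    Tendsto (fun n : ℕ => (n : ℝ) ^ ((3 : ℝ) / 2) *
      ((∫ θ in -π..π, F n θ) - ∫ θ in -(2 * π / n)..(2 * π / n), F n θ)) atTop (𝓝 0) := by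
  have hdecay : Tendsto (fun n : ℕ => 2 * π * ((n : ℝ) ^ ((3 : ℝ) / 2) * exp (-(1 / 8) * n)))
      atTop (𝓝 0) := by
    simpa using ((tendsto_rpow_mul_exp_neg_mul_atTop_nhds_zero _ _ (by norm_num)).comp
      tendsto_natCast_atTop_atTop).const_mul (2 * π)
  refine squeeze_zero_norm' ?_ hdecay
  filter_upwards [eventually_ge_atTop 2] with n hn
  have hn0 : (0 : ℝ) < n := by positivity
  have hr : 2 * π / n ≤ π := by
    have h2 : (2 : ℝ) ≤ n := by exact_mod_cast hn
    rw [div_le_iff₀ hn0]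
    nlinarith [pi_pos]
  have htail := abs_intervalIntegral_sub_le ((hF n).intervalIntegrable _ _) (by positivity) hr
    fun θ h₁ h₂ => (hle n θ).trans (abs_cosProd_le_of_le_abs (by omega) h₁ h₂)
  rw [norm_mul, norm_eq_abs, norm_eq_abs, abs_of_nonneg (by positivity)]
  calc _ ≤ (n : ℝ) ^ ((3 : ℝ) / 2) * (2 * π * exp (-n / 8)) := by gcongr
    _ = _ := by ring_nf

lemma tendsto_rpow_mul_integral_of_abs_le_abs_cosProd {F : ℕ → ℝ → ℝ}
    (hF : ∀ n, Continuous (F n)) (hle : ∀ n θ, |F n θ| ≤ |cosProd n θ|)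
    (hlim : ∀ s, Tendsto (fun n : ℕ => F n (s / (n : ℝ) ^ ((3 : ℝ) / 2))) atTop
      (𝓝 (exp (-s ^ 2 / 24)))) :
    Tendsto (fun n : ℕ => (n : ℝ) ^ ((3 : ℝ) / 2) * ∫ θ in -π..π, F n θ) atTop
      (𝓝 (√(24 * π))) := by
  simpa using ((tendsto_rpow_mul_integral_near_zero (fun n => (hF n).measurable) hle hlim).add
    (tendsto_rpow_mul_integral_sub_integral_near_zero hF hle)).congr fun n => by ring

lemma integral_exp_int_mul_I (j : ℤ) :
    ∫ θ in -π..π, cexp (↑((j : ℝ) * θ) * I) = if j = 0 then ((2 * π : ℝ) : ℂ) else 0 := by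
  split_ifs with hj
  · simp [hj, two_mul]
  · have hc : (j : ℂ) * I ≠ 0 := mul_ne_zero (Int.cast_ne_zero.2 hj) Complex.I_ne_zero
    have hperiod : cexp ((j : ℂ) * I * π) = cexp ((j : ℂ) * I * ↑(-π)) :=
      Complex.exp_eq_exp_iff_exists_int.2 ⟨j, by push_cast; ring⟩
    simp_rw [Complex.ofReal_mul, Complex.ofReal_intCast, mul_right_comm _ _ I]
    rw [integral_exp_mul_complex hc, hperiod, sub_self, zero_div]

lemma one_add_exp_mul_I (x : ℝ) :
    1 + cexp (x * I) = 2 * (Real.cos (x / 2) : ℂ) * cexp (↑(x / 2) * I) := by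
  have hsq : cexp (x * I) = cexp (↑(x / 2) * I) * cexp (↑(x / 2) * I) := by
    rw [← Complex.exp_add]; push_cast; ring_nf
  have hinv : cexp (-(↑(x / 2) * I)) * cexp (↑(x / 2) * I) = 1 := by
    rw [← Complex.exp_add, neg_add_cancel, Complex.exp_zero]
  rw [Complex.ofReal_cos, Complex.cos, neg_mul]
  linear_combination hsq - hinv

lemma prod_one_add_exp_eq_sum (n : ℕ) (θ : ℝ) :
    ∏ k ∈ Icc 1 n, (1 + cexp (↑(k * θ) * I)) =
      ∑ s ∈ (Icc 1 n).powerset, cexp (↑((s.sum id : ℕ) * θ) * I) := by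
  rw [prod_one_add]
  refine sum_congr rfl fun s _ => ?_
  rw [← Complex.exp_sum, ← sum_mul, ← Complex.ofReal_sum, ← sum_mul, Nat.cast_sum]
  rfl

lemma prod_one_add_exp_eq_cosProd (n : ℕ) (θ : ℝ) :
    ∏ k ∈ Icc 1 n, (1 + cexp (↑(k * θ) * I)) =
      2 ^ n * (cosProd n θ : ℂ) * cexp (↑(n * (n + 1) / 4 * θ) * I) := by
  simp_rw [one_add_exp_mul_I, prod_mul_distrib, prod_const, Nat.card_Icc, Nat.add_sub_cancel,
    cosProd, Complex.ofReal_prod, ← Complex.exp_sum, ← sum_mul, ← Complex.ofReal_sum]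
  congr 4
  rw [← sum_div, ← sum_mul, sum_Icc_id_eq]
  ring

lemma levelCard_mul_two_pi_eq_integral (n m : ℕ) :
    ((levelCard n m * (2 * π) : ℝ) : ℂ) =
      ∫ θ in -π..π, (∏ k ∈ Icc 1 n, (1 + cexp (↑(k * θ) * I))) * cexp (↑(-(m * θ)) * I) := by
  have hterm : ∀ (s : Finset ℕ) (θ : ℝ), cexp (↑((s.sum id : ℕ) * θ) * I) * cexp (↑(-(m * θ)) * I)
      = cexp (↑((((s.sum id : ℕ) - m : ℤ) : ℝ) * θ) * I) := fun s θ => by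
    rw [← Complex.exp_add]; push_cast; ring_nf
  simp_rw [prod_one_add_exp_eq_sum, sum_mul, hterm]
  rw [intervalIntegral.integral_finsetSum fun s _ => by
    apply Continuous.intervalIntegrable; fun_prop]
  simp_rw [integral_exp_int_mul_I, sub_eq_zero, Nat.cast_inj]
  rw [sum_ite, sum_const_zero, add_zero, sum_const, nsmul_eq_mul, levelCard]
  push_cast
  ring

lemma levelCard_mul_two_pi_eq (n m : ℕ) :
    levelCard n m * (2 * π) =
      2 ^ n * ∫ θ in -π..π, cosProd n θ * cos ((n * (n + 1) / 4 - m) * θ) := by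
  have h := congrArg Complex.re (levelCard_mul_two_pi_eq_integral n m)
  rw [Complex.ofReal_re] at h
  rw [h, ← intervalIntegral.integral_const_mul, ← RCLike.re_to_complex,
    ← intervalIntegral.intervalIntegral_re (by apply Continuous.intervalIntegrable; fun_prop)]
  refine intervalIntegral.integral_congr fun θ _ => ?_
  simp only [RCLike.re_to_complex]
  rw [prod_one_add_exp_eq_cosProd, mul_assoc, ← Complex.exp_add, ← add_mul, ← Complex.ofReal_add,
    show ((2 : ℂ) ^ n) = ((2 ^ n : ℝ) : ℂ) by push_cast; rfl, ← Complex.ofReal_mul,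
    Complex.re_ofReal_mul, Complex.exp_ofReal_mul_I_re]
  ring_nf

lemma bddAbove_range_levelCard (n : ℕ) : BddAbove (Set.range (levelCard n)) := by
  refine ⟨2 ^ n, ?_⟩
  rintro _ ⟨K, rfl⟩
  calc levelCard n K ≤ (Icc 1 n).powerset.card := card_filter_le _ _
    _ = 2 ^ n := by rw [card_powerset, Nat.card_Icc, Nat.add_sub_cancel]

lemma levelCard_le_M (n K : ℕ) : levelCard n K ≤ M n :=
  le_ciSup (bddAbove_range_levelCard n) K

lemma exists_levelCard_eq_M (n : ℕ) : ∃ K, levelCard n K = M n :=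
  Nat.sSup_mem (Set.range_nonempty _) (bddAbove_range_levelCard n)

lemma M_mul_two_pi_div_pow_le_integral (n : ℕ) :
    M n * (2 * π) / 2 ^ n ≤ ∫ θ in -π..π, |cosProd n θ| := by
  obtain ⟨K, hK⟩ := exists_levelCard_eq_M n
  rw [← hK, levelCard_mul_two_pi_eq, mul_div_cancel_left₀ _ (by positivity)]
  refine intervalIntegral.integral_mono_on (by linarith [pi_pos])
    (by apply Continuous.intervalIntegrable; fun_prop)
    (by apply Continuous.intervalIntegrable; fun_prop) fun θ _ => ?_
  exact (le_abs_self _).trans (by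
    rw [abs_mul]; exact mul_le_of_le_one_right (abs_nonneg _) (abs_cos_le_one _))

lemma integral_cosProd_mul_cos_fract_le (n : ℕ) :
    ∫ θ in -π..π, cosProd n θ * cos (Int.fract ((n * (n + 1) : ℝ) / 4) * θ) ≤
      M n * (2 * π) / 2 ^ n := by
  set m := ⌊(n * (n + 1) : ℝ) / 4⌋₊
  have hfract : Int.fract ((n * (n + 1) : ℝ) / 4) = n * (n + 1) / 4 - m := by
    rw [Int.fract, natCast_floor_eq_intCast_floor (by positivity)]
  rw [hfract, le_div_iff₀ (by positivity), mul_comm, ← levelCard_mul_two_pi_eq]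
  gcongr
  exact_mod_cast levelCard_le_M n m

/-- Asymptotics of `M n`: `M n = √(6/π) · 2ⁿ / n^{3/2} · (1 + o(1))`,
i.e. `M n · n^{3/2} / 2ⁿ → √(6/π)` as `n → ∞`. -/
theorem stmt16 :
    Filter.Tendsto (fun n : ℕ => (M n : ℝ) * (n : ℝ) ^ ((3 : ℝ) / 2) / 2 ^ n)
      Filter.atTop (nhds (Real.sqrt (6 / Real.pi))) := by
  have hupper := tendsto_rpow_mul_integral_of_abs_le_abs_cosProd
    (F := fun n θ => |cosProd n θ|) (by fun_prop) (fun n θ => (abs_abs _).le)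
    fun s => by simpa [abs_of_pos (exp_pos _)] using (tendsto_cosProd_div_rpow s).abs
  have hlower := tendsto_rpow_mul_integral_of_abs_le_abs_cosProd
    (F := fun n θ => cosProd n θ * cos (Int.fract ((n * (n + 1) : ℝ) / 4) * θ)) (by fun_prop)
    (fun n θ => by
      rw [abs_mul]; exact mul_le_of_le_one_right (abs_nonneg _) (abs_cos_le_one _))
    fun s => by
      simpa using (tendsto_cosProd_div_rpow s).mul (tendsto_cos_mul_div_rpow
        (fun n => by rw [abs_of_nonneg (Int.fract_nonneg _)]; exact (Int.fract_lt_one _).le) s)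
  have hM : Tendsto (fun n : ℕ => (n : ℝ) ^ ((3 : ℝ) / 2) * (M n * (2 * π) / 2 ^ n)) atTop
      (𝓝 (√(24 * π))) :=
    tendsto_of_tendsto_of_tendsto_of_le_of_le hlower hupper
      (fun n => mul_le_mul_of_nonneg_left (integral_cosProd_mul_cos_fract_le n) (by positivity))
      (fun n => mul_le_mul_of_nonneg_left (M_mul_two_pi_div_pow_le_integral n) (by positivity))
  have hconst : √(24 * π) / (2 * π) = √(6 / π) := by
    rw [show 24 * π = 6 / π * (2 * π) ^ 2 by field_simp; ring, sqrt_mul (by positivity),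
      sqrt_sq (by positivity), mul_div_cancel_right₀ _ (by positivity)]
  rw [← hconst]
  refine (hM.div_const (2 * π)).congr fun n => ?_
  field_simp
end
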